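/- Let n, k, D be integers with n ≥ 1, k ≥ 1, and D > 2*(n−1)*k, and let l₁ : ℤ. Define the finite set P = { l₁ + j*D + u*k : 0 ≤ j ≤ n−1, 0 ≤ u ≤ n−1 } ⊆ ℤ, and for s : ℤ define the autocorrelation C(s) = |{ x ∈ P : x + s ∈ P }|. Then: (i) |P| = n²; (ii) for all integers q, m with |q| ≤ n−1 and |m| ≤ n−1, C(q*D + m*k) = (n − |q|) * (n − |m|); (iii) for every integer s that is not of the form q*D + m*k with |q| ≤ n−1 and |m| ≤ n−1, C(s) = 0. -/

import Mathlib

/-!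
Write the points of `P` as `l₁ + jD + uk` with `(j, u)` in the box `[0, n - 1]²`. Since
`D > 2(n - 1)k`, the form `(j, u) ↦ jD + uk` is injective on pairs whose second coordinates
differ by at most `2(n - 1)`; hence for `s = qD + mk` the point `l₁ + jD + uk + s` lies in `P`
exactly when `(j + q, u + m)` lies in the box. The autocorrelation of `P` at `qD + mk` is
therefore that of the box at `(q, m)`, which factors into the autocorrelations `n - |q|` and
`n - |m|` of `[0, n - 1]`. Any `s` with `C(s) ≠ 0` is a difference of two points of `P`, hence
of the form `qD + mk` with `|q|, |m| ≤ n - 1`.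
-/

/-- The union of `n` arithmetic progressions of length `n` with common
difference `k`, whose starting points `l₁, l₁ + D, …, l₁ + (n-1)D` are
equally spaced with spacing `D`. -/
noncomputable def progPattern (n k D l₁ : ℤ) : Finset ℤ :=
  Finset.image (fun p : ℤ × ℤ => l₁ + p.1 * D + p.2 * k)
    ((Finset.Icc 0 (n - 1)) ×ˢ (Finset.Icc 0 (n - 1)))

/-- The autocorrelation `C(s) = |P ∩ (P - s)| = |{x ∈ P : x + s ∈ P}|`. -/
def autocorr (P : Finset ℤ) (s : ℤ) : ℕ :=
  (P.filter (fun x => x + s ∈ P)).card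

open Finset

lemma exists_sub_eq_of_autocorr_ne_zero {P : Finset ℤ} {s : ℤ} (h : autocorr P s ≠ 0) :
    ∃ x ∈ P, ∃ y ∈ P, y - x = s := by
  obtain ⟨x, hx⟩ := card_ne_zero.1 h
  rw [mem_filter] at hx
  exact ⟨x, hx.1, x + s, hx.2, by ring⟩

lemma autocorr_Icc (a b q : ℤ) : autocorr (Icc a b) q = (b + 1 - a - |q|).toNat := by
  have h : (Icc a b).filter (· + q ∈ Icc a b) = Icc (max a (a - q)) (min b (b - q)) := by
    ext x
    simp only [mem_filter, mem_Icc]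
    omega
  rw [autocorr, h, Int.card_Icc]
  congr 1
  rcases abs_cases q with ⟨hq, hq₀⟩ | ⟨hq, hq₀⟩ <;> omega

lemma card_filter_add_mem_product (s t : Finset ℤ) (v : ℤ × ℤ) :
    #((s ×ˢ t).filter (· + v ∈ s ×ˢ t)) = autocorr s v.1 * autocorr t v.2 := by
  simp only [autocorr, mem_product, Prod.fst_add, Prod.snd_add]
  rw [filter_product (· + v.1 ∈ s) (· + v.2 ∈ t), card_product]

lemma autocorr_image_eq_card_filter {G : Type*} [AddCommGroup G] [DecidableEq G]
    (B : Finset G) (f : G →+ ℤ) (c : ℤ) (v : G) (hinj : Set.InjOn f B)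
    (hv : ∀ p ∈ B, ∀ p' ∈ B, f (p + v) = f p' → p + v = p') :
    autocorr (B.image (c + f ·)) (f v) = #(B.filter (· + v ∈ B)) := by
  have hmem : ∀ p ∈ B, c + f p + f v ∈ B.image (c + f ·) ↔ p + v ∈ B := by
    intro p hp
    simp only [mem_image, add_assoc, ← map_add, add_right_inj]
    constructor
    · rintro ⟨p', hp', hf⟩
      rwa [hv p hp p' hp' hf.symm]
    · exact fun h => ⟨_, h, rfl⟩
  rw [autocorr, filter_image, card_image_of_injOn]
  · exact congrArg card (filter_congr hmem)
  · intro p hp p' hp' h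
    exact hinj (mem_filter.1 hp).1 (mem_filter.1 hp').1 (add_left_cancel h)

def linearForm (D k : ℤ) : ℤ × ℤ →+ ℤ :=
  AddMonoidHom.mk' (fun p => p.1 * D + p.2 * k) fun p p' => by
    simp only [Prod.fst_add, Prod.snd_add]; ring

@[simp]
lemma linearForm_apply (D k : ℤ) (p : ℤ × ℤ) : linearForm D k p = p.1 * D + p.2 * k := rfl

noncomputable def indexBox (n : ℤ) : Finset (ℤ × ℤ) := Icc 0 (n - 1) ×ˢ Icc 0 (n - 1)

lemma mem_indexBox {n : ℤ} {p : ℤ × ℤ} :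
    p ∈ indexBox n ↔ 0 ≤ p.1 ∧ p.1 ≤ n - 1 ∧ 0 ≤ p.2 ∧ p.2 ≤ n - 1 := by
  simp only [indexBox, mem_product, mem_Icc, and_assoc]

lemma progPattern_eq_image (n k D l₁ : ℤ) :
    progPattern n k D l₁ = (indexBox n).image (l₁ + linearForm D k ·) := by
  simp only [progPattern, indexBox, linearForm_apply, add_assoc]

lemma eq_of_linearForm_eq {D k : ℤ} {w w' : ℤ × ℤ} (hk : 0 < k) (hw : |w.2 - w'.2| * k < D)
    (h : linearForm D k w = linearForm D k w') : w = w' := by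
  have hD : 0 < D := lt_of_le_of_lt (by positivity) hw
  have h' : (w.1 - w'.1) * D = (w'.2 - w.2) * k := by
    simp only [linearForm_apply] at h
    linarith
  have h1 : w.1 = w'.1 := by
    by_contra hne
    have hge : D ≤ |w.1 - w'.1| * D :=
      le_mul_of_one_le_left hD.le (Int.one_le_abs (sub_ne_zero.2 hne))
    have habs := congrArg abs h'
    rw [abs_mul, abs_mul, abs_sub_comm w'.2, abs_of_pos hD, abs_of_pos hk] at habs
    linarith
  rw [h1, sub_self, zero_mul, eq_comm, mul_eq_zero, sub_eq_zero] at h'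
  exact Prod.ext h1 (h'.resolve_right hk.ne').symm

section Box

variable {n k D : ℤ} (hk : 0 < k) (hD : 2 * (n - 1) * k < D)
include hk hD

lemma eq_of_linearForm_eq_of_abs_le {w w' : ℤ × ℤ} (hw : |w.2 - w'.2| ≤ 2 * (n - 1))
    (h : linearForm D k w = linearForm D k w') : w = w' :=
  eq_of_linearForm_eq hk ((mul_le_mul_of_nonneg_right hw hk.le).trans_lt hD) h

lemma injOn_linearForm_indexBox : Set.InjOn (linearForm D k) (indexBox n) := by
  intro p hp p' hp'
  rw [mem_coe, mem_indexBox] at hp hp'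
  exact eq_of_linearForm_eq_of_abs_le hk hD (abs_le.2 ⟨by omega, by omega⟩)

lemma add_eq_of_linearForm_add_eq {v : ℤ × ℤ} (hv : |v.2| ≤ n - 1) :
    ∀ p ∈ indexBox n, ∀ p' ∈ indexBox n,
      linearForm D k (p + v) = linearForm D k p' → p + v = p' := by
  intro p hp p' hp'
  refine eq_of_linearForm_eq_of_abs_le hk hD ?_
  rw [mem_indexBox] at hp hp'
  rw [Prod.snd_add, abs_le]
  have := abs_le.1 hv
  constructor <;> omega

lemma card_progPattern (l₁ : ℤ) (hn : 0 ≤ n) :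
    ((progPattern n k D l₁).card : ℤ) = n ^ 2 := by
  have hinj : Set.InjOn (l₁ + linearForm D k ·) (indexBox n) :=
    fun p hp p' hp' h => injOn_linearForm_indexBox hk hD hp hp' (add_left_cancel h)
  rw [progPattern_eq_image, card_image_of_injOn hinj, indexBox, card_product, Int.card_Icc,
    sub_add_cancel, sub_zero]
  push_cast [Int.toNat_of_nonneg hn]
  ring

lemma autocorr_progPattern (l₁ : ℤ) {q m : ℤ} (hq : |q| ≤ n - 1) (hm : |m| ≤ n - 1) :
    (autocorr (progPattern n k D l₁) (q * D + m * k) : ℤ) = (n - |q|) * (n - |m|) := by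
  rw [show q * D + m * k = linearForm D k (q, m) from rfl, progPattern_eq_image,
    autocorr_image_eq_card_filter _ _ _ _ (injOn_linearForm_indexBox hk hD)
      (add_eq_of_linearForm_add_eq hk hD hm),
    indexBox, card_filter_add_mem_product, autocorr_Icc, autocorr_Icc]
  push_cast [Int.toNat_of_nonneg (show 0 ≤ n - 1 + 1 - 0 - |q| by omega),
    Int.toNat_of_nonneg (show 0 ≤ n - 1 + 1 - 0 - |m| by omega)]
  ring

end Box

lemma autocorr_progPattern_eq_zero {n k D l₁ s : ℤ}
    (hs : ¬ ∃ q m : ℤ, |q| ≤ n - 1 ∧ |m| ≤ n - 1 ∧ s = q * D + m * k) :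
    autocorr (progPattern n k D l₁) s = 0 := by
  by_contra h
  obtain ⟨x, hx, y, hy, rfl⟩ := exists_sub_eq_of_autocorr_ne_zero h
  rw [progPattern_eq_image, mem_image] at hx hy
  obtain ⟨p, hp, rfl⟩ := hx
  obtain ⟨p', hp', rfl⟩ := hy
  rw [mem_indexBox] at hp hp'
  refine hs ⟨p'.1 - p.1, p'.2 - p.2, abs_le.2 ⟨by omega, by omega⟩,
    abs_le.2 ⟨by omega, by omega⟩, ?_⟩
  simp only [linearForm_apply]
  ring

theorem autocorrelation_of_equally_spaced_progressions
    (n k D l₁ : ℤ) (hn : 1 ≤ n) (hk : 1 ≤ k) (hD : 2 * (n - 1) * k < D) :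
    ((progPattern n k D l₁).card : ℤ) = n ^ 2 ∧
    (∀ q m : ℤ, |q| ≤ n - 1 → |m| ≤ n - 1 →
      (autocorr (progPattern n k D l₁) (q * D + m * k) : ℤ) =
        (n - |q|) * (n - |m|)) ∧
    (∀ s : ℤ, (¬ ∃ q m : ℤ, |q| ≤ n - 1 ∧ |m| ≤ n - 1 ∧ s = q * D + m * k) →
      autocorr (progPattern n k D l₁) s = 0) :=
  ⟨card_progPattern hk hD l₁ (by omega), fun _ _ hq hm => autocorr_progPattern hk hD l₁ hq hm,
    fun _ hs => autocorr_progPattern_eq_zero hs⟩
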